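/- vᵀ M⁻¹ u = −4 + (−1)^{n+1}. (Since the linking-number vector of K₂ is lk = (−1)^{t₀} u with t₀ = n + 1, this gives ⟨rot, M⁻¹ lk⟩ = 4(−1)^{t₀−1} + 1, so the rotation number of K₂ after surgery is r₂ = 2(−1)^{t₀−1} − ⟨rot, M⁻¹ lk⟩, which equals −3 if t₀ is odd and 1 if t₀ is even, as computed in Section 6 of the paper.) -/
import Mathlib


open Matrix

/-- The linking matrix `M` from Section 6 of the paper: an `n x n` matrix over `Q`
(indices `0, ..., n-1` here correspond to the paper's `1, ..., n`) with diagonal entries `-2`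
except the last one which is `-1`, entries `-1` on the super- and sub-diagonal,
extra entries `-1` at positions `(1,3)` and `(3,1)` (paper indexing), and zeros elsewhere. -/
def linkM (n : ℕ) : Matrix (Fin n) (Fin n) ℚ :=
  Matrix.of fun i j =>
    if i = j then (if (i : ℕ) = n - 1 then -1 else -2)
    else if (i : ℕ) + 1 = (j : ℕ) ∨ (j : ℕ) + 1 = (i : ℕ) then -1
    else if ((i : ℕ) = 0 ∧ (j : ℕ) = 2) ∨ ((i : ℕ) = 2 ∧ (j : ℕ) = 0) then -1
    else 0

/-- The vector of rotation numbers of the surgery curves: `v₁ = 2`, `v₂ = -2`, `vₙ = 1`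
(paper indexing), all other entries `0`. -/
def vecV (n : ℕ) : Fin n → ℚ := fun i =>
  if (i : ℕ) = 0 then 2 else if (i : ℕ) = 1 then -2 else if (i : ℕ) = n - 1 then 1 else 0

/-- The vector `u` with `u₁ = 3`, `u₂ = 1`, `u₃ = 1` (paper indexing), all other entries `0`. -/
def vecU2 (n : ℕ) : Fin n → ℚ := fun i =>
  if (i : ℕ) = 0 then 3 else if (i : ℕ) = 1 then 1 else if (i : ℕ) = 2 then 1 else 0

/- ### Auxiliary ℕ-indexed entry functions -/

/-- ℕ-indexed version of the entries of `linkM`. -/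
def mEnt (n i j : ℕ) : ℚ :=
  if i = j then (if i = n - 1 then -1 else -2)
  else if i + 1 = j ∨ j + 1 = i then -1
  else if (i = 0 ∧ j = 2) ∨ (i = 2 ∧ j = 0) then -1
  else 0

/-- ℕ-indexed version of the entries of the inverse of `linkM`. -/
def nEnt (i j : ℕ) : ℚ :=
  if i ≤ 1 ∧ j ≤ 1 then (if i = j then -1 else 0)
  else if i ≤ 1 then (-1) ^ j
  else if j ≤ 1 then (-1) ^ i
  else (-1) ^ (i + j + 1) * ((min i j : ℕ) + 1)

/-- The candidate inverse matrix. -/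
def invNMat (n : ℕ) : Matrix (Fin n) (Fin n) ℚ :=
  Matrix.of fun i j => nEnt (i : ℕ) (j : ℕ)

lemma linkM_apply (n : ℕ) (i j : Fin n) : linkM n i j = mEnt n (i : ℕ) (j : ℕ) := by
  simp [linkM, mEnt, Fin.ext_iff]

lemma nEnt_big {i j : ℕ} (hi : 2 ≤ i) (hj : 2 ≤ j) :
    nEnt i j = (-1) ^ (i + j + 1) * ((min i j : ℕ) + 1) := by
  unfold nEnt
  rw [if_neg (by omega), if_neg (by omega), if_neg (by omega)]

lemma nEnt_left {i j : ℕ} (hi : 2 ≤ i) (hj : j ≤ 1) : nEnt i j = (-1) ^ i := by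
  unfold nEnt
  rw [if_neg (by omega), if_neg (by omega), if_pos hj]

lemma nEnt_top {i j : ℕ} (hi : i ≤ 1) (hj : 2 ≤ j) : nEnt i j = (-1) ^ j := by
  unfold nEnt
  rw [if_neg (by omega), if_pos hi]

lemma nEnt_00 : nEnt 0 0 = -1 := by norm_num [nEnt]
lemma nEnt_01 : nEnt 0 1 = 0 := by norm_num [nEnt]
lemma nEnt_10 : nEnt 1 0 = 0 := by norm_num [nEnt]
lemma nEnt_11 : nEnt 1 1 = -1 := by norm_num [nEnt]

lemma neg_one_pow_succ (m : ℕ) : ((-1 : ℚ)) ^ (m + 1) = -(-1) ^ m := by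
  rw [pow_succ]; ring

lemma neg_one_pow_two_mul (k : ℕ) : ((-1 : ℚ)) ^ (2 * k) = 1 := by
  rw [pow_mul]; norm_num

/-- Reduce a range-sum to a sum over the support. -/
lemma sum_range_support (n : ℕ) (F : ℕ → ℚ) (s : Finset ℕ)
    (hs : ∀ m ∈ s, m < n) (h0 : ∀ m, m < n → m ∉ s → F m = 0) :
    ∑ m ∈ Finset.range n, F m = ∑ m ∈ s, F m :=
  (Finset.sum_subset (fun m hm => Finset.mem_range.2 (hs m hm))
    (fun m hm hms => h0 m (Finset.mem_range.1 hm) hms)).symm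

lemma sum_pair' (a b : ℕ) (hab : a ≠ b) (F : ℕ → ℚ) :
    ∑ m ∈ ({a, b} : Finset ℕ), F m = F a + F b := Finset.sum_pair hab

lemma sum_triple (a b c : ℕ) (hab : a ≠ b) (hac : a ≠ c) (hbc : b ≠ c) (F : ℕ → ℚ) :
    ∑ m ∈ ({a, b, c} : Finset ℕ), F m = F a + F b + F c := by
  rw [Finset.sum_insert (by simp [hab, hac]), Finset.sum_pair hbc]; ring

lemma sum_quad (a b c d : ℕ) (hab : a ≠ b) (hac : a ≠ c) (had : a ≠ d) (hbc : b ≠ c)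
    (hbd : b ≠ d) (hcd : c ≠ d) (F : ℕ → ℚ) :
    ∑ m ∈ ({a, b, c, d} : Finset ℕ), F m = F a + F b + F c + F d := by
  rw [Finset.sum_insert (by simp [hab, hac, had]), Finset.sum_insert (by simp [hbc, hbd]),
    Finset.sum_pair hcd]; ring

/-- The key identity: row `i` of `M` dotted with column `j` of `N` is `δ_{ij}`. -/
lemma key (n i j : ℕ) (hn : 4 ≤ n) (hi : i < n) (hj : j < n) :
    ∑ m ∈ Finset.range n, mEnt n i m * nEnt m j = if i = j then 1 else 0 := by
  rcases Nat.lt_or_ge i 3 with hi3 | hi3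
  · -- i = 0, 1, 2
    interval_cases i
    · -- i = 0 : support {0,1,2}
      rw [sum_range_support n _ {0, 1, 2} (by intro m hm; simp at hm; omega)
          (by intro m hm hms; simp at hms
              have hz : mEnt n 0 m = 0 := by
                unfold mEnt; split_ifs <;> first | rfl | (exfalso; first | exact ‹False› | omega | (simp_all; omega) | simp_all)
              rw [hz, zero_mul]),
        sum_triple 0 1 2 (by omega) (by omega) (by omega)]
      have m0 : mEnt n 0 0 = -2 := by unfold mEnt; split_ifs <;> first | rfl | (exfalso; first | exact ‹False› | omega | (simp_all; omega) | simp_all)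
      have m1 : mEnt n 0 1 = -1 := by unfold mEnt; split_ifs <;> first | rfl | (exfalso; first | exact ‹False› | omega | (simp_all; omega) | simp_all)
      have m2 : mEnt n 0 2 = -1 := by unfold mEnt; split_ifs <;> first | rfl | (exfalso; first | exact ‹False› | omega | (simp_all; omega) | simp_all)
      rw [m0, m1, m2]
      rcases Nat.lt_or_ge j 2 with hj2 | hj2
      · interval_cases j <;> norm_num [nEnt]
      · rw [nEnt_top (by norm_num) hj2, nEnt_top (by norm_num) hj2,
          nEnt_big (by norm_num) hj2, if_neg (by omega),
          show min 2 j = 2 by omega, show 2 + j + 1 = j + 3 by ring,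
          show j + 3 = (j+1)+1+1 from rfl, neg_one_pow_succ, neg_one_pow_succ, neg_one_pow_succ]
        push_cast; ring
    · -- i = 1 : support {0,1,2}
      rw [sum_range_support n _ {0, 1, 2} (by intro m hm; simp at hm; omega)
          (by intro m hm hms; simp at hms
              have hz : mEnt n 1 m = 0 := by
                unfold mEnt; split_ifs <;> first | rfl | (exfalso; first | exact ‹False› | omega | (simp_all; omega) | simp_all)
              rw [hz, zero_mul]),
        sum_triple 0 1 2 (by omega) (by omega) (by omega)]
      have m0 : mEnt n 1 0 = -1 := by unfold mEnt; split_ifs <;> first | rfl | (exfalso; first | exact ‹False› | omega | (simp_all; omega) | simp_all)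
      have m1 : mEnt n 1 1 = -2 := by unfold mEnt; split_ifs <;> first | rfl | (exfalso; first | exact ‹False› | omega | (simp_all; omega) | simp_all)
      have m2 : mEnt n 1 2 = -1 := by unfold mEnt; split_ifs <;> first | rfl | (exfalso; first | exact ‹False› | omega | (simp_all; omega) | simp_all)
      rw [m0, m1, m2]
      rcases Nat.lt_or_ge j 2 with hj2 | hj2
      · interval_cases j <;> norm_num [nEnt]
      · rw [nEnt_top (by norm_num) hj2, nEnt_top (by norm_num) hj2,
          nEnt_big (by norm_num) hj2, if_neg (by omega),
          show min 2 j = 2 by omega, show 2 + j + 1 = j + 3 by ring,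
          show j + 3 = (j+1)+1+1 from rfl, neg_one_pow_succ, neg_one_pow_succ, neg_one_pow_succ]
        push_cast; ring
    · -- i = 2 : support {0,1,2,3}
      rw [sum_range_support n _ {0, 1, 2, 3} (by intro m hm; simp at hm; omega)
          (by intro m hm hms; simp at hms
              have hz : mEnt n 2 m = 0 := by
                unfold mEnt; split_ifs <;> first | rfl | (exfalso; first | exact ‹False› | omega | (simp_all; omega) | simp_all)
              rw [hz, zero_mul]),
        sum_quad 0 1 2 3 (by omega) (by omega) (by omega) (by omega) (by omega) (by omega)]
      have m0 : mEnt n 2 0 = -1 := by unfold mEnt; split_ifs <;> first | rfl | (exfalso; first | exact ‹False› | omega | (simp_all; omega) | simp_all)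
      have m1 : mEnt n 2 1 = -1 := by unfold mEnt; split_ifs <;> first | rfl | (exfalso; first | exact ‹False› | omega | (simp_all; omega) | simp_all)
      have m2 : mEnt n 2 2 = -2 := by unfold mEnt; split_ifs <;> first | rfl | (exfalso; first | exact ‹False› | omega | (simp_all; omega) | simp_all)
      have m3 : mEnt n 2 3 = -1 := by unfold mEnt; split_ifs <;> first | rfl | (exfalso; first | exact ‹False› | omega | (simp_all; omega) | simp_all)
      rw [m0, m1, m2, m3]
      rcases Nat.lt_or_ge j 4 with hj4 | hj4
      · interval_cases j <;> norm_num [nEnt]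
      · rw [nEnt_top (by norm_num) (by omega), nEnt_top (by norm_num) (by omega),
          nEnt_big (by norm_num) (by omega), nEnt_big (by norm_num) (by omega),
          if_neg (by omega), show min 2 j = 2 by omega, show min 3 j = 3 by omega,
          show 2 + j + 1 = (j+1)+1+1 by ring, show 3 + j + 1 = ((j+1)+1+1)+1 by ring,
          neg_one_pow_succ, neg_one_pow_succ, neg_one_pow_succ, neg_one_pow_succ]
        push_cast; ring
  · rcases Nat.lt_or_ge i (n - 1) with hin | hin
    · -- middle case : 3 ≤ i ≤ n - 2 ; write i = a + 1 with 2 ≤ a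
      obtain ⟨a, rfl⟩ : ∃ a, i = a + 1 := ⟨i - 1, by omega⟩
      have ha : 2 ≤ a := by omega
      have han : a + 2 < n := by omega
      rw [sum_range_support n _ {a, a + 1, a + 2} (by intro m hm; simp at hm; omega)
          (by intro m hm hms; simp at hms
              have hz : mEnt n (a+1) m = 0 := by
                unfold mEnt; split_ifs <;> first | rfl | (exfalso; first | exact ‹False› | omega | (simp_all; omega) | simp_all)
              rw [hz, zero_mul]),
        sum_triple a (a+1) (a+2) (by omega) (by omega) (by omega)]
      have m0 : mEnt n (a+1) a = -1 := by
        unfold mEnt; split_ifs <;> first | rfl | (exfalso; first | exact ‹False› | omega | (simp_all; omega) | simp_all)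
      have m1 : mEnt n (a+1) (a+1) = -2 := by
        unfold mEnt; split_ifs <;> first | rfl | (exfalso; first | exact ‹False› | omega | (simp_all; omega) | simp_all)
      have m2 : mEnt n (a+1) (a+2) = -1 := by
        unfold mEnt; split_ifs <;> first | rfl | (exfalso; first | exact ‹False› | omega | (simp_all; omega) | simp_all)
      rw [m0, m1, m2]
      rcases Nat.lt_or_ge j 2 with hj2 | hj2
      · rw [nEnt_left (by omega) (by omega), nEnt_left (by omega) (by omega),
          nEnt_left (by omega) (by omega), if_neg (by omega),
          show a + 2 = (a+1)+1 from rfl, neg_one_pow_succ, neg_one_pow_succ]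
        ring
      · -- 2 ≤ j : all three entries in the "big" block
        rw [nEnt_big (by omega) hj2, nEnt_big (by omega) hj2, nEnt_big (by omega) hj2]
        rcases Nat.lt_or_ge j a with hja | hja
        · -- j < a : all mins are j
          rw [if_neg (by omega), show min a j = j by omega, show min (a+1) j = j by omega,
            show min (a+2) j = j by omega,
            show a + 1 + j + 1 = (a+j+1)+1 by ring, show a + 2 + j + 1 = ((a+j+1)+1)+1 by ring,
            neg_one_pow_succ, neg_one_pow_succ]
          ring
        · rcases Nat.lt_or_ge (a + 2) j with hja2 | hja2
          · -- j ≥ a + 3 : all mins are the row index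
            rw [if_neg (by omega), show min a j = a by omega, show min (a+1) j = a+1 by omega,
              show min (a+2) j = a+2 by omega,
              show a + 1 + j + 1 = (a+j+1)+1 by ring, show a + 2 + j + 1 = ((a+j+1)+1)+1 by ring,
              neg_one_pow_succ, neg_one_pow_succ]
            push_cast; ring
          · -- j ∈ {a, a+1, a+2}
            have : j = a ∨ j = a + 1 ∨ j = a + 2 := by omega
            rcases this with h | h | h <;> rw [h]
            · rw [if_neg (by omega), show min a a = a by omega, show min (a+1) a = a by omega,
                show min (a+2) a = a by omega,
                show a + 1 + a + 1 = (a+a+1)+1 by ring, show a + 2 + a + 1 = ((a+a+1)+1)+1 by ring,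
                neg_one_pow_succ, neg_one_pow_succ]
              ring
            · rw [if_pos rfl, show min a (a+1) = a by omega,
                show min (a+1) (a+1) = a+1 by omega, show min (a+2) (a+1) = a+1 by omega,
                Even.neg_one_pow (⟨a+1, by ring⟩ : Even (a + (a+1) + 1)),
                Odd.neg_one_pow (⟨a+1, by ring⟩ : Odd (a+1 + (a+1) + 1)),
                Even.neg_one_pow (⟨a+2, by ring⟩ : Even (a+2 + (a+1) + 1))]
              push_cast; ring
            · rw [if_neg (by omega), show min a (a+2) = a by omega,
                show min (a+1) (a+2) = a+1 by omega, show min (a+2) (a+2) = a+2 by omega,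
                Odd.neg_one_pow (⟨a+1, by ring⟩ : Odd (a + (a+2) + 1)),
                Even.neg_one_pow (⟨a+2, by ring⟩ : Even (a+1 + (a+2) + 1)),
                Odd.neg_one_pow (⟨a+2, by ring⟩ : Odd (a+2 + (a+2) + 1))]
              push_cast; ring
    · -- last row : i = n - 1 ; write n = b + 2 so i = b + 1, support {b, b+1}
      have hieq : i = n - 1 := by omega
      subst hieq
      obtain ⟨b, rfl⟩ : ∃ b, n = b + 2 := ⟨n - 2, by omega⟩
      have hb : 2 ≤ b := by omega
      have hsimp : b + 2 - 1 = b + 1 := by omega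
      rw [hsimp]
      rw [sum_range_support (b+2) _ {b, b + 1} (by intro m hm; simp at hm; omega)
          (by intro m hm hms; simp at hms
              have hz : mEnt (b+2) (b+1) m = 0 := by
                unfold mEnt; split_ifs <;> first | rfl | (exfalso; first | exact ‹False› | omega | (simp_all; omega) | simp_all)
              rw [hz, zero_mul]),
        sum_pair' b (b+1) (by omega)]
      have m0 : mEnt (b+2) (b+1) b = -1 := by
        unfold mEnt; split_ifs <;> first | rfl | (exfalso; first | exact ‹False› | omega | (simp_all; omega) | simp_all)
      have m1 : mEnt (b+2) (b+1) (b+1) = -1 := by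
        unfold mEnt; split_ifs <;> first | rfl | (exfalso; first | exact ‹False› | omega | (simp_all; omega) | simp_all)
      rw [m0, m1]
      rcases Nat.lt_or_ge j 2 with hj2 | hj2
      · rw [nEnt_left (by omega) (by omega), nEnt_left (by omega) (by omega),
          if_neg (by omega), neg_one_pow_succ]
        ring
      · rw [nEnt_big (by omega) hj2, nEnt_big (by omega) hj2]
        rcases Nat.lt_or_ge j b with hjb | hjb
        · rw [if_neg (by omega), show min b j = j by omega, show min (b+1) j = j by omega,
            show b + 1 + j + 1 = (b+j+1)+1 by ring, neg_one_pow_succ]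
          ring
        · have : j = b ∨ j = b + 1 := by omega
          rcases this with h | h <;> rw [h]
          · rw [if_neg (by omega), show min b b = b by omega, show min (b+1) b = b by omega,
              show b + 1 + b + 1 = (b+b+1)+1 by ring, neg_one_pow_succ]
            ring
          · rw [if_pos rfl, show min b (b+1) = b by omega, show min (b+1) (b+1) = b+1 by omega,
              Even.neg_one_pow (⟨b+1, by ring⟩ : Even (b + (b+1) + 1)),
              Odd.neg_one_pow (⟨b+1, by ring⟩ : Odd (b+1 + (b+1) + 1))]
            push_cast; ring

lemma mulMN (n : ℕ) (hn : 4 ≤ n) : linkM n * invNMat n = 1 := by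
  ext i j
  rw [Matrix.mul_apply, Matrix.one_apply]
  have : ∀ k : Fin n, linkM n i k * invNMat n k j
      = (fun m => mEnt n (i : ℕ) m * nEnt m (j : ℕ)) (k : ℕ) := by
    intro k; rw [linkM_apply]; rfl
  rw [Finset.sum_congr rfl fun k _ => this k,
    Fin.sum_univ_eq_sum_range (fun m => mEnt n (i : ℕ) m * nEnt m (j : ℕ)) n,
    key n i j hn i.isLt j.isLt]
  simp [Fin.ext_iff]

lemma inv_linkM (n : ℕ) (hn : 4 ≤ n) : (linkM n)⁻¹ = invNMat n :=
  Matrix.inv_eq_right_inv (mulMN n hn)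

/-- ℕ-indexed version of `vecU2`. -/
def uEnt (m : ℕ) : ℚ := if m = 0 then 3 else if m = 1 then 1 else if m = 2 then 1 else 0

/-- ℕ-indexed version of `vecV`. -/
def vEnt (n m : ℕ) : ℚ :=
  if m = 0 then 2 else if m = 1 then -2 else if m = n - 1 then 1 else 0

lemma mulVec_invN (n : ℕ) (hn : 4 ≤ n) (i : Fin n) :
    (invNMat n).mulVec (vecU2 n) i = 3 * nEnt (i : ℕ) 0 + nEnt (i : ℕ) 1 + nEnt (i : ℕ) 2 := by
  have : ∀ k : Fin n, invNMat n i k * vecU2 n k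
      = (fun m => nEnt (i : ℕ) m * uEnt m) (k : ℕ) := by
    intro k; rfl
  rw [Matrix.mulVec, dotProduct, Finset.sum_congr rfl fun k _ => this k,
    Fin.sum_univ_eq_sum_range (fun m => nEnt (i : ℕ) m * uEnt m) n,
    sum_range_support n _ {0, 1, 2} (by intro m hm; simp at hm; omega)
      (by intro m hm hms; simp at hms
          have : uEnt m = 0 := by unfold uEnt; split_ifs <;> first | rfl | (exfalso; first | exact ‹False› | omega | (simp_all; omega) | simp_all)
          rw [this, mul_zero]),
    sum_triple 0 1 2 (by omega) (by omega) (by omega)]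
  have u0 : uEnt 0 = 3 := rfl
  have u1 : uEnt 1 = 1 := rfl
  have u2 : uEnt 2 = 1 := rfl
  rw [u0, u1, u2]; ring

/-- `vᵀ M⁻¹ u = -4 + (-1)^(n+1)`, giving the rotation number of `K₂` after surgery. -/
theorem stmt_12 (n : ℕ) (hn : 4 ≤ n) :
    vecV n ⬝ᵥ (linkM n)⁻¹.mulVec (vecU2 n) = -4 + (-1 : ℚ) ^ (n + 1) := by
  rw [inv_linkM n hn]
  set G : ℕ → ℚ := fun m => 3 * nEnt m 0 + nEnt m 1 + nEnt m 2 with hG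
  have hdot : ∀ i : Fin n, vecV n i * (invNMat n).mulVec (vecU2 n) i
      = (fun m => vEnt n m * G m) (i : ℕ) := by
    intro i
    rw [mulVec_invN n hn i]
    rfl
  rw [dotProduct, Finset.sum_congr rfl fun i _ => hdot i,
    Fin.sum_univ_eq_sum_range (fun m => vEnt n m * G m) n,
    sum_range_support n _ {0, 1, n - 1} (by intro m hm; simp at hm; omega)
      (by intro m hm hms; simp at hms
          have : vEnt n m = 0 := by unfold vEnt; split_ifs <;> first | rfl | (exfalso; first | exact ‹False› | omega | (simp_all; omega) | simp_all)
          rw [this, zero_mul]),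
    sum_triple 0 1 (n-1) (by omega) (by omega) (by omega)]
  have v0 : vEnt n 0 = 2 := by unfold vEnt; split_ifs <;> first | rfl | (exfalso; first | exact ‹False› | omega | (simp_all; omega) | simp_all)
  have v1 : vEnt n 1 = -2 := by unfold vEnt; split_ifs <;> first | rfl | (exfalso; first | exact ‹False› | omega | (simp_all; omega) | simp_all)
  have v2 : vEnt n (n-1) = 1 := by unfold vEnt; split_ifs <;> first | rfl | (exfalso; first | exact ‹False› | omega | (simp_all; omega) | simp_all)
  have g0 : G 0 = -2 := by
    rw [hG]; simp only []
    rw [nEnt_00, nEnt_01, nEnt_top (by norm_num) (by norm_num)]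
    norm_num
  have g1 : G 1 = 0 := by
    rw [hG]; simp only []
    rw [nEnt_10, nEnt_11, nEnt_top (by norm_num) (by norm_num)]
    norm_num
  have g2 : G (n-1) = (-1) ^ (n + 1) := by
    have e1 : ((-1 : ℚ)) ^ (n + 1) = (-1) ^ (n - 1) := by
      rw [show n + 1 = (n - 1) + 2 by omega, pow_add]; norm_num
    have e2 : ((-1 : ℚ)) ^ (n - 1 + 2 + 1) = -(-1) ^ (n - 1) := by
      rw [show n - 1 + 2 + 1 = (n - 1) + 3 from rfl, pow_add]; ring
    rw [hG]; simp only []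
    rw [nEnt_left (by omega) (by norm_num), nEnt_left (by omega) (by norm_num),
      nEnt_big (by omega) (by norm_num), show min (n-1) 2 = 2 by omega, e2, e1]
    push_cast; ring
  rw [v0, v1, v2, g0, g1, g2]; ring
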